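/- arXiv:1111.1799 — 4 statements merged into one kernel-verified Lean document; each statement's English description precedes it below -/
import Mathlib

section
/- Define polynomials F_q(n,k,j) in q for 0 ≤ k ≤ n/2 and k ≤ j ≤ n-k+1 by: F_q(n,k,n-k+1) = 1, F_q(n,k,n-k) = [k]_q + [n-k]_q, and for k ≤ j < n-k, F_q(n,k,j) = ([j]_q + [n-j]_q)·F_q(n,k,j+1) − q^k·[j+1-k]_q·[n-k-j]_q·F_q(n,k,j+2). Then F_q(n,0,j) = [n]_q·[n-1]_q·...·[j]_q for all 1 ≤ j ≤ n+1. -/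
/-- The q-integer `[m]_q = 1 + q + ... + q^(m-1)`. -/
def qint {R : Type*} [Semiring R] (q : R) (m : ℕ) : R :=
  ∑ i ∈ Finset.range m, q ^ i

lemma prod_Icc_qint_step {R : Type*} [CommRing R] (q : R) (j n : ℕ) (h : j ≤ n) :
    ∏ i ∈ Finset.Icc j n, qint q i = qint q j * ∏ i ∈ Finset.Icc (j+1) n, qint q i := by
  have hins : Finset.Icc j n = insert j (Finset.Icc (j+1) n) := by
    ext x; simp; omega
  rw [hins, Finset.prod_insert (by simp)]

/-- If `F k j` satisfies the defining recursion of the polynomials `F_q(n,k,j)`, then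
`F_q(n,0,j) = [n]_q·[n-1]_q···[j]_q` for all `1 ≤ j ≤ n+1`. -/
theorem F_at_k_zero {R : Type*} [CommRing R] (q : R) (n : ℕ) (F : ℕ → ℕ → R)
    (hF1 : ∀ k, 2 * k ≤ n → F k (n - k + 1) = 1)
    (hF2 : ∀ k, 2 * k ≤ n → F k (n - k) = qint q k + qint q (n - k))
    (hrec : ∀ k j, 2 * k ≤ n → k ≤ j → j < n - k →
      F k j = (qint q j + qint q (n - j)) * F k (j + 1) -
        q ^ k * qint q (j + 1 - k) * qint q (n - k - j) * F k (j + 2)) :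
    ∀ j, 1 ≤ j → j ≤ n + 1 → F 0 j = ∏ i ∈ Finset.Icc j n, qint q i := by
  have key : ∀ d : ℕ, ∀ j, 1 ≤ j → n + 1 = j + d →
      F 0 j = ∏ i ∈ Finset.Icc j n, qint q i := by
    intro d
    induction d using Nat.strong_induction_on with
    | _ d ih =>
      intro j hj hd
      match d with
      | 0 =>
        have hj' : j = n + 1 := by omega
        subst hj'
        rw [Finset.Icc_eq_empty (by omega), Finset.prod_empty]
        have := hF1 0 (by omega)
        simpa using this
      | 1 =>
        have hj' : j = n := by omega
        subst hj'
        have h := hF2 0 (by omega)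
        simp only [Nat.sub_zero] at h
        rw [h, Finset.Icc_self, Finset.prod_singleton]
        simp [qint]
      | (d+2) =>
        have hjn : j < n := by omega
        have h := hrec 0 j (by omega) (by omega) (by omega)
        simp only [Nat.sub_zero, pow_zero, one_mul] at h
        rw [ih (d+1) (by omega) (j+1) (by omega) (by omega),
            ih d (by omega) (j+2) (by omega) (by omega)] at h
        rw [h, prod_Icc_qint_step q j n (by omega),
            prod_Icc_qint_step q (j+1) n (by omega)]
        have hj1 : j + 1 + 1 = j + 2 := by omega
        rw [hj1]
        ring
  intro j hj hjn
  exact key (n + 1 - j) j hj (by omega)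
end

section
/- Define sets S(n) of subsets of [n] ∪ {1̄, ..., n̄} recursively by S(0) = {∅}, S(1) = {{1}, {1̄}}, and S(n+1) = {X ∪ {n+1} : X ∈ S(n)} ∪ {X ∪ {(n+1)-bar} : X ∈ S(n), n ∉ X} ∪ S(n-1). Then |S(n)| = 2^n for all n ≥ 0. -/
/-- Elements of `[n] ∪ {1̄,...,n̄}`: `(i, false)` is the unbarred element `i`, and
`(i, true)` is the barred element `ī`. -/
abbrev BarredElt := ℕ × Bool

/-- The recursively defined family `S(n)` of subsets of `[n] ∪ {1̄,...,n̄}`: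
`S(0) = {∅}`, `S(1) = {{1},{1̄}}`, and
`S(n+1) = {X∪{n+1} : X ∈ S(n)} ∪ {X∪{(n+1)-bar} : X ∈ S(n), n ∉ X} ∪ S(n-1)`. -/
def S : ℕ → Finset (Finset BarredElt)
  | 0 => {∅}
  | 1 => {{(1, false)}, {(1, true)}}
  | n + 2 =>
      ((S (n + 1)).image (fun X => insert (n + 2, false) X)) ∪
        (((S (n + 1)).filter (fun X => (n + 1, false) ∉ X)).image
          (fun X => insert (n + 2, true) X)) ∪
        S n

lemma S_bound : ∀ n, ∀ X ∈ S n, ∀ p ∈ X, p.1 ≤ n := by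
  intro n
  induction n using Nat.strong_induction_on with
  | _ n ih =>
    match n with
    | 0 =>
      intro X hX p hp
      simp only [S, Finset.mem_singleton] at hX
      subst hX
      simp at hp
    | 1 =>
      intro X hX p hp
      simp only [S, Finset.mem_insert, Finset.mem_singleton] at hX
      rcases hX with h | h <;> subst h <;> simp only [Finset.mem_singleton] at hp <;>
        subst hp <;> simp
    | n + 2 =>
      intro X hX p hp
      simp only [S, Finset.mem_union, Finset.mem_image, Finset.mem_filter] at hX
      rcases hX with (⟨Y, hY, rfl⟩ | ⟨Y, ⟨hY, _⟩, rfl⟩) | hX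
      · rcases Finset.mem_insert.mp hp with rfl | hp
        · simp
        · exact le_trans (ih (n+1) (by omega) Y hY p hp) (by omega)
      · rcases Finset.mem_insert.mp hp with rfl | hp
        · simp
        · exact le_trans (ih (n+1) (by omega) Y hY p hp) (by omega)
      · exact le_trans (ih n (by omega) X hX p hp) (by omega)

lemma S_not_mem {n m : ℕ} {b : Bool} {X : Finset BarredElt} (hX : X ∈ S n) (h : n < m) :
    ((m, b) : BarredElt) ∉ X :=
  fun hm => absurd (S_bound n X hX _ hm) (by simp; omega)

lemma card_image_insert (a : BarredElt) (T : Finset (Finset BarredElt))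
    (h : ∀ X ∈ T, a ∉ X) : (T.image (fun X => insert a X)).card = T.card :=
  Finset.card_image_of_injOn fun X hX Y hY e => by
    rw [← Finset.erase_insert (h X hX), ← Finset.erase_insert (h Y hY), e]

lemma disjAB (m : ℕ) : Disjoint ((S (m+1)).image (fun X => insert ((m+2 : ℕ), false) X))
    ((((S (m+1)).filter (fun X => ((m+1 : ℕ), false) ∉ X)).image
      (fun X => insert ((m+2 : ℕ), true) X))) := by
  rw [Finset.disjoint_left]
  rintro x hx hx'
  obtain ⟨Y, hY, rfl⟩ := Finset.mem_image.mp hx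
  have hmem : (((m+2 : ℕ), false) : BarredElt) ∈ insert ((m+2:ℕ), false) Y :=
    Finset.mem_insert_self _ _
  obtain ⟨Z, hZ, hZe⟩ := Finset.mem_image.mp hx'
  rw [← hZe] at hmem
  rcases Finset.mem_insert.mp hmem with h' | h'
  · simp at h'
  · exact S_not_mem (Finset.mem_filter.mp hZ).1 (by omega) h'

lemma disjAC (m : ℕ) : Disjoint ((S (m+1)).image (fun X => insert ((m+2 : ℕ), false) X))
    (S m) := by
  rw [Finset.disjoint_left]
  rintro x hx hx'
  obtain ⟨Y, hY, rfl⟩ := Finset.mem_image.mp hx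
  exact S_not_mem hx' (by omega) (Finset.mem_insert_self _ _)

lemma disjBC (m : ℕ) : Disjoint (((S (m+1)).filter (fun X => ((m+1 : ℕ), false) ∉ X)).image
      (fun X => insert ((m+2 : ℕ), true) X)) (S m) := by
  rw [Finset.disjoint_left]
  rintro x hx hx'
  obtain ⟨Y, hY, rfl⟩ := Finset.mem_image.mp hx
  exact S_not_mem hx' (by omega) (Finset.mem_insert_self _ _)

lemma notmemA (m : ℕ) : ∀ X ∈ S (m+1), (((m+2 : ℕ), false) : BarredElt) ∉ X :=
  fun _ hX => S_not_mem hX (by omega)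

lemma notmemB (m : ℕ) : ∀ X ∈ (S (m+1)).filter (fun X => ((m+1 : ℕ), false) ∉ X),
    (((m+2 : ℕ), true) : BarredElt) ∉ X :=
  fun _ hX => S_not_mem (Finset.mem_filter.mp hX).1 (by omega)

lemma card_step (m : ℕ) : (S (m+2)).card
    = (S (m+1)).card + ((S (m+1)).filter (fun X => ((m+1 : ℕ), false) ∉ X)).card
      + (S m).card := by
  simp only [S]
  rw [Finset.card_union_of_disjoint (Finset.disjoint_union_left.mpr ⟨disjAC m, disjBC m⟩),
    Finset.card_union_of_disjoint (disjAB m),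
    card_image_insert _ _ (notmemA m), card_image_insert _ _ (notmemB m)]

lemma filter_step (m : ℕ) :
    ((S (m+2)).filter (fun X => ((m+2 : ℕ), false) ∉ X)).card
      = ((S (m+1)).filter (fun X => ((m+1 : ℕ), false) ∉ X)).card + (S m).card := by
  simp only [S, Finset.filter_union]
  have hA : ((S (m+1)).image (fun X => insert ((m+2 : ℕ), false) X)).filter
      (fun X => ((m+2 : ℕ), false) ∉ X) = ∅ := by
    rw [Finset.filter_eq_empty_iff]
    rintro x hx
    obtain ⟨Y, hY, rfl⟩ := Finset.mem_image.mp hx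
    simp
  have hB : (((S (m+1)).filter (fun X => ((m+1 : ℕ), false) ∉ X)).image
      (fun X => insert ((m+2 : ℕ), true) X)).filter (fun X => ((m+2 : ℕ), false) ∉ X)
      = ((S (m+1)).filter (fun X => ((m+1 : ℕ), false) ∉ X)).image
      (fun X => insert ((m+2 : ℕ), true) X) := by
    rw [Finset.filter_eq_self]
    rintro x hx
    obtain ⟨Y, hY, rfl⟩ := Finset.mem_image.mp hx
    intro hc
    rcases Finset.mem_insert.mp hc with h' | h'
    · simp at h'
    · exact S_not_mem (Finset.mem_filter.mp hY).1 (by omega) h'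
  have hC : (S m).filter (fun X => ((m+2 : ℕ), false) ∉ X) = S m := by
    rw [Finset.filter_eq_self]
    exact fun x hx => S_not_mem hx (by omega)
  rw [hA, hB, hC, Finset.empty_union,
    Finset.card_union_of_disjoint (disjBC m), card_image_insert _ _ (notmemB m)]

/-- `|S(n)| = 2^n` for all `n ≥ 0`. -/
theorem card_S (n : ℕ) : (S n).card = 2 ^ n := by
  suffices h : ∀ n, (S n).card = 2 ^ n ∧
      ((S (n+1)).filter (fun X => ((n+1 : ℕ), false) ∉ X)).card = 2 ^ n from (h n).1
  intro n
  induction n using Nat.strong_induction_on with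
  | _ n ih =>
  match n with
  | 0 => exact ⟨by decide, by decide⟩
  | 1 => exact ⟨by decide, by decide⟩
  | n + 2 =>
    obtain ⟨h1, h2⟩ := ih (n+1) (by omega)
    obtain ⟨h0, hb⟩ := ih n (by omega)
    constructor
    · rw [card_step, h1, hb, h0]; ring
    · have h := filter_step (n+1)
      rw [h2, h1] at h
      rw [show n + 2 + 1 = n + 1 + 2 from rfl, h]; ring
end

section
/- With S(n) as defined recursively (S(0) = {∅}, S(1) = {{1},{1̄}}, S(n+1) = {X∪{n+1} : X ∈ S(n)} ∪ {X∪{(n+1)-bar} : X ∈ S(n), n ∉ X} ∪ S(n-1)), the number of elements of S(n) not containing the element n is 2^(n-1), for all n ≥ 1. -/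
lemma S_card : ∀ n, (S n).card = 2 ^ n ∧
    ((S n).filter (fun X => (n, false) ∉ X)).card = 2 ^ (n - 1) := by
  intro n
  induction n using Nat.strong_induction_on with
  | _ n ih =>
    match n with
    | 0 => constructor <;> decide
    | 1 => constructor <;> decide
    | n+2 =>
      obtain ⟨h1c, h1f⟩ := ih (n+1) (by omega)
      obtain ⟨h0c, _⟩ := ih n (by omega)
      set A := (S (n + 1)).image (fun X => insert ((n + 2 : ℕ), false) X) with hA
      set B := ((S (n + 1)).filter (fun X => ((n + 1 : ℕ), false) ∉ X)).image
          (fun X => insert ((n + 2 : ℕ), true) X) with hB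
      have hSn : S (n+2) = A ∪ B ∪ S n := rfl
      -- no element of S (n+1) or its filter contains the new points
      have hnotA : ∀ X ∈ S (n+1), ((n+2 : ℕ), false) ∉ X := by
        intro X hX h
        have := S_bound (n+1) X hX _ h; simp at this
      have hnotB : ∀ X ∈ S (n+1), ((n+2 : ℕ), true) ∉ X := by
        intro X hX h
        have := S_bound (n+1) X hX _ h; simp at this
      -- cardinalities of the pieces
      have hcardA : A.card = 2 ^ (n+1) := by
        rw [hA, Finset.card_image_of_injOn, h1c]
        intro X hX Y hY h
        have := congrArg (Finset.erase · ((n+2 : ℕ), false)) h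
        simpa [Finset.erase_insert (hnotA X hX), Finset.erase_insert (hnotA Y hY)]
          using this
      have hcardB : B.card = 2 ^ n := by
        rw [hB, Finset.card_image_of_injOn]
        · simpa using h1f
        · intro X hX Y hY h
          rw [Finset.mem_coe, Finset.mem_filter] at hX hY
          have := congrArg (Finset.erase · ((n+2 : ℕ), true)) h
          simpa [Finset.erase_insert (hnotB X hX.1), Finset.erase_insert (hnotB Y hY.1)]
            using this
      -- membership characterizations
      have hmemA : ∀ X ∈ A, ((n+2 : ℕ), false) ∈ X := by
        intro X hX
        rw [hA, Finset.mem_image] at hX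
        obtain ⟨Y, _, rfl⟩ := hX
        exact Finset.mem_insert_self _ _
      have hmemB : ∀ X ∈ B, ((n+2 : ℕ), false) ∉ X := by
        intro X hX
        rw [hB, Finset.mem_image] at hX
        obtain ⟨Y, hY, rfl⟩ := hX
        rw [Finset.mem_filter] at hY
        intro h
        rcases Finset.mem_insert.1 h with h | h
        · simp at h
        · exact hnotA Y hY.1 h
      have hmemBtrue : ∀ X ∈ B, ((n+2 : ℕ), true) ∈ X := by
        intro X hX
        rw [hB, Finset.mem_image] at hX
        obtain ⟨Y, _, rfl⟩ := hX
        exact Finset.mem_insert_self _ _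
      have hmemC : ∀ X ∈ S n, ((n+2 : ℕ), false) ∉ X ∧ ((n+2 : ℕ), true) ∉ X := by
        intro X hX
        constructor <;> intro h <;>
          · have := S_bound n X hX _ h; simp at this
      have hdAB : Disjoint A B := by
        rw [Finset.disjoint_left]
        intro X hXA hXB
        exact hmemB X hXB (hmemA X hXA)
      have hdABC : Disjoint (A ∪ B) (S n) := by
        rw [Finset.disjoint_left]
        intro X hX hXC
        rcases Finset.mem_union.1 hX with h | h
        · exact (hmemC X hXC).1 (hmemA X h)
        · exact (hmemC X hXC).2 (hmemBtrue X h)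
      constructor
      · rw [hSn, Finset.card_union_of_disjoint hdABC, Finset.card_union_of_disjoint hdAB,
          hcardA, hcardB, h0c]
        ring
      · have : (S (n+2)).filter (fun X => ((n+2 : ℕ), false) ∉ X) = B ∪ S n := by
          rw [hSn, Finset.filter_union, Finset.filter_union]
          rw [Finset.filter_false_of_mem (by intro X hX; simp [hmemA X hX]),
            Finset.filter_true_of_mem (fun X hX => hmemB X hX),
            Finset.filter_true_of_mem (fun X hX => (hmemC X hX).1)]
          simp
        rw [show (n+2) - 1 = n + 1 from rfl]
        have hdBC : Disjoint B (S n) := by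
          rw [Finset.disjoint_left]
          intro X hXB hXC
          exact (hmemC X hXC).2 (hmemBtrue X hXB)
        calc ((S (n+2)).filter (fun X => ((n+2 : ℕ), false) ∉ X)).card
            = (B ∪ S n).card := by rw [this]
          _ = B.card + (S n).card := Finset.card_union_of_disjoint hdBC
          _ = 2 ^ n + 2 ^ n := by rw [hcardB, h0c]
          _ = 2 ^ (n+1) := by ring

/-- For `n ≥ 1`, the number of elements of `S(n)` not containing the element `n` is
`2^(n-1)`. -/
theorem card_S_not_top (n : ℕ) (hn : 1 ≤ n) :
    ((S n).filter (fun X => (n, false) ∉ X)).card = 2 ^ (n - 1) := by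
  exact (S_card n).2
end

section
/- Define P(n, x, y, z) = Σ_{X ∈ S(n)} (Π_{i ∈ X∩[n]} x_i)·(Π_{ī ∈ X∩[n̄]} y_i)·z^((n−|X|)/2), where x = (x_1, x_2, ...), y = (y_1, y_2, ...), z are indeterminates. Then for n ≥ 1, P(n+1, x, y, z) = (x_{n+1} + y_{n+1})·P(n, x, y, z) − (x_n·y_{n+1} − z)·P(n−1, x, y, z). -/
/-- The generating polynomial
`P(n,x,y,z) = Σ_{X ∈ S(n)} (Π_{i ∈ X∩[n]} x_i)·(Π_{ī ∈ X} y_i)·z^((n−|X|)/2)`. -/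
def Pgen {R : Type*} [CommSemiring R] (x y : ℕ → R) (z : R) (n : ℕ) : R :=
  ∑ X ∈ S n,
    (∏ p ∈ X.filter (fun p => p.2 = false), x p.1) *
      (∏ p ∈ X.filter (fun p => p.2 = true), y p.1) * z ^ ((n - X.card) / 2)

lemma S_fst_le (n : ℕ) : ∀ X ∈ S n, ∀ p ∈ X, p.1 ≤ n := by
  induction n using Nat.strong_induction_on with
  | _ n ih =>
    match n with
    | 0 =>
      intro X hX p hp
      simp [S] at hX; subst hX; simp at hp
    | 1 =>
      intro X hX p hp
      simp [S] at hX
      rcases hX with rfl | rfl <;> simp at hp <;> simp [hp]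
    | (m+2) =>
      intro X hX p hp
      simp only [S, Finset.mem_union, Finset.mem_image, Finset.mem_filter] at hX
      rcases hX with (⟨Y, hY, rfl⟩ | ⟨Y, ⟨hY, _⟩, rfl⟩) | hX
      · rcases Finset.mem_insert.1 hp with rfl | hpY
        · simp
        · exact le_trans (ih (m+1) (by omega) Y hY p hpY) (by omega)
      · rcases Finset.mem_insert.1 hp with rfl | hpY
        · simp
        · exact le_trans (ih (m+1) (by omega) Y hY p hpY) (by omega)
      · exact le_trans (ih m (by omega) X hX p hp) (by omega)

lemma S_notMem {n : ℕ} {X : Finset BarredElt} (hX : X ∈ S n) {m : ℕ} (hm : n < m) (b : Bool) :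
    (m, b) ∉ X := fun h => absurd (S_fst_le n X hX _ h) (by omega)

lemma S_card_le (n : ℕ) : ∀ X ∈ S n, X.card ≤ n := by
  induction n using Nat.strong_induction_on with
  | _ n ih =>
    match n with
    | 0 =>
      intro X hX; simp [S] at hX; subst hX; simp
    | 1 =>
      intro X hX; simp [S] at hX
      rcases hX with rfl | rfl <;> simp
    | (m+2) =>
      intro X hX
      simp only [S, Finset.mem_union, Finset.mem_image, Finset.mem_filter] at hX
      rcases hX with (⟨Y, hY, rfl⟩ | ⟨Y, ⟨hY, _⟩, rfl⟩) | hX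
      · rw [Finset.card_insert_of_notMem (S_notMem hY (by omega) _)]
        have := ih (m+1) (by omega) Y hY; omega
      · rw [Finset.card_insert_of_notMem (S_notMem hY (by omega) _)]
        have := ih (m+1) (by omega) Y hY; omega
      · have := ih m (by omega) X hX; omega

lemma S_filter (n : ℕ) (hn : 1 ≤ n) :
    (S n).filter (fun X => (n, false) ∈ X) = (S (n-1)).image (fun X => insert (n, false) X) := by
  match n with
  | 1 =>
    ext X
    simp [S, Finset.filter_insert, Finset.mem_filter]
    rintro rfl h
    simp at h
  | (m+2) =>
    ext X
    simp only [S, Finset.mem_union, Finset.mem_image, Finset.mem_filter, Nat.add_sub_cancel]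
    constructor
    · rintro ⟨(⟨Y, hY, rfl⟩ | ⟨Y, ⟨hY, _⟩, rfl⟩) | hX, hmem⟩
      · exact ⟨Y, hY, rfl⟩
      · rcases Finset.mem_insert.1 hmem with h | h
        · simp at h
        · exact absurd h (S_notMem hY (by omega) _)
      · exact absurd hmem (S_notMem hX (by omega) _)
    · rintro ⟨Y, hY, rfl⟩
      exact ⟨Or.inl (Or.inl ⟨Y, hY, rfl⟩), Finset.mem_insert_self _ _⟩

lemma S_insert_inj {n m : ℕ} (h : n < m) (b : Bool) {X Y : Finset BarredElt}
    (hX : X ∈ S n) (hY : Y ∈ S n) (hEq : insert (m, b) X = insert (m, b) Y) : X = Y := by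
  have := congrArg (fun s => Finset.erase s (m, b)) hEq
  simpa [Finset.erase_insert (S_notMem hX h b), Finset.erase_insert (S_notMem hY h b)]
    using this

def term {R : Type*} [CommSemiring R] (x y : ℕ → R) (z : R) (m : ℕ) (X : Finset BarredElt) : R :=
  (∏ p ∈ X.filter (fun p => p.2 = false), x p.1) *
    (∏ p ∈ X.filter (fun p => p.2 = true), y p.1) * z ^ ((m - X.card) / 2)

lemma term_insert_false {R : Type*} [CommSemiring R] (x y : ℕ → R) (z : R) {n m : ℕ}
    (h : n < m) {X : Finset BarredElt} (hX : X ∈ S n) :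
    term x y z (n + 1) (insert (m, false) X) = x m * term x y z n X := by
  have hnm : ((m : ℕ), false) ∉ X := S_notMem hX h _
  unfold term
  rw [Finset.filter_insert, Finset.filter_insert]
  norm_num
  rw [Finset.prod_insert (fun hc => hnm (Finset.mem_filter.1 hc).1),
      Finset.card_insert_of_notMem hnm, Nat.succ_sub_succ]
  ring

lemma term_insert_true {R : Type*} [CommSemiring R] (x y : ℕ → R) (z : R) {n m : ℕ}
    (h : n < m) {X : Finset BarredElt} (hX : X ∈ S n) :
    term x y z (n + 1) (insert (m, true) X) = y m * term x y z n X := by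
  have hnm : ((m : ℕ), true) ∉ X := S_notMem hX h _
  unfold term
  rw [Finset.filter_insert, Finset.filter_insert]
  norm_num
  rw [Finset.prod_insert (fun hc => hnm (Finset.mem_filter.1 hc).1),
      Finset.card_insert_of_notMem hnm, Nat.succ_sub_succ]
  ring

lemma term_shift {R : Type*} [CommSemiring R] (x y : ℕ → R) (z : R) {n : ℕ}
    {X : Finset BarredElt} (hX : X ∈ S n) :
    term x y z (n + 2) X = z * term x y z n X := by
  unfold term
  have hc : n + 2 - X.card = (n - X.card) + 2 := by
    have := S_card_le n X hX; omega
  rw [hc, Nat.add_div_right _ (by norm_num), pow_succ]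
  ring

lemma Pgen_eq_sum_term {R : Type*} [CommSemiring R] (x y : ℕ → R) (z : R) (m : ℕ) :
    Pgen x y z m = ∑ X ∈ S m, term x y z m X := rfl


/-- The three-term recurrence for `P`: for `n ≥ 1`,
`P(n+1,x,y,z) = (x_{n+1} + y_{n+1})·P(n,x,y,z) − (x_n·y_{n+1} − z)·P(n−1,x,y,z)`. -/
theorem Pgen_recurrence {R : Type*} [CommRing R] (x y : ℕ → R) (z : R) (n : ℕ) (hn : 1 ≤ n) :
    Pgen x y z (n + 1) =
      (x (n + 1) + y (n + 1)) * Pgen x y z n - (x n * y (n + 1) - z) * Pgen x y z (n - 1) := by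
  obtain ⟨k, rfl⟩ : ∃ k, n = k + 1 := ⟨n - 1, by omega⟩
  simp only [Nat.add_sub_cancel]
  have hS : S (k + 2) =
      ((S (k + 1)).image (fun X => insert (k + 2, false) X)) ∪
        (((S (k + 1)).filter (fun X => (k + 1, false) ∉ X)).image
          (fun X => insert (k + 2, true) X)) ∪ S k := rfl
  have d1 : Disjoint ((S (k + 1)).image (fun X => insert (k + 2, false) X))
      (((S (k + 1)).filter (fun X => (k + 1, false) ∉ X)).image
        (fun X => insert (k + 2, true) X)) := by
    rw [Finset.disjoint_left]
    rintro X hXA hXB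
    obtain ⟨Y, hY, rfl⟩ := Finset.mem_image.1 hXA
    obtain ⟨Y', hY', hEq⟩ := Finset.mem_image.1 hXB
    have : ((k + 2 : ℕ), false) ∈ insert (k + 2, true) Y' :=
      hEq ▸ Finset.mem_insert_self _ _
    rcases Finset.mem_insert.1 this with h | h
    · simp at h
    · exact S_notMem (Finset.mem_filter.1 hY').1 (by omega) _ h
  have d2 : Disjoint (((S (k + 1)).image (fun X => insert (k + 2, false) X)) ∪
      (((S (k + 1)).filter (fun X => (k + 1, false) ∉ X)).image
        (fun X => insert (k + 2, true) X))) (S k) := by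
    rw [Finset.disjoint_left]
    rintro X hXA hXC
    rcases Finset.mem_union.1 hXA with h | h
    · obtain ⟨Y, hY, rfl⟩ := Finset.mem_image.1 h
      exact S_notMem hXC (by omega) false (Finset.mem_insert_self _ _)
    · obtain ⟨Y, hY, rfl⟩ := Finset.mem_image.1 h
      exact S_notMem hXC (by omega) true (Finset.mem_insert_self _ _)
  rw [Pgen_eq_sum_term, hS, Finset.sum_union d2, Finset.sum_union d1]
  -- sum over A
  have hA : ∑ X ∈ (S (k + 1)).image (fun X => insert (k + 2, false) X),
      term x y z (k + 2) X = x (k + 2) * Pgen x y z (k + 1) := by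
    rw [Finset.sum_image (fun X hX Y hY h => S_insert_inj (by omega) false hX hY h)]
    rw [Finset.sum_congr rfl (fun X hX => term_insert_false x y z (by omega) hX),
      ← Finset.mul_sum, Pgen_eq_sum_term]
  -- sum over B
  have hB : ∑ X ∈ ((S (k + 1)).filter (fun X => (k + 1, false) ∉ X)).image
      (fun X => insert (k + 2, true) X), term x y z (k + 2) X =
      y (k + 2) * (Pgen x y z (k + 1) - x (k + 1) * Pgen x y z k) := by
    rw [Finset.sum_image (fun X hX Y hY h =>
      S_insert_inj (by omega) true (Finset.mem_filter.1 hX).1 (Finset.mem_filter.1 hY).1 h)]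
    rw [Finset.sum_congr rfl
      (fun X hX => term_insert_true x y z (by omega) (Finset.mem_filter.1 hX).1),
      ← Finset.mul_sum]
    congr 1
    have hsplit := Finset.sum_filter_add_sum_filter_not (S (k + 1))
      (fun X => (k + 1, false) ∈ X) (term x y z (k + 1))
    have hmem : ∑ X ∈ (S (k + 1)).filter (fun X => (k + 1, false) ∈ X),
        term x y z (k + 1) X = x (k + 1) * Pgen x y z k := by
      rw [S_filter (k + 1) (by omega), Nat.add_sub_cancel,
        Finset.sum_image (fun X hX Y hY h => S_insert_inj (by omega) false hX hY h),
        Finset.sum_congr rfl (fun X hX => term_insert_false x y z (by omega) hX),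
        ← Finset.mul_sum, Pgen_eq_sum_term]
    rw [Pgen_eq_sum_term, ← hsplit, hmem]
    ring
  -- sum over C
  have hC : ∑ X ∈ S k, term x y z (k + 2) X = z * Pgen x y z k := by
    rw [Finset.sum_congr rfl (fun X hX => term_shift x y z hX), ← Finset.mul_sum,
      Pgen_eq_sum_term]
  rw [hA, hB, hC]
  ring
end
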